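/- Fix n ≥ 1, m ≥ 1, and a probability vector (p_1,…,p_{2m}), and perform a biased m-shelf shuffle of n cards in which the n cards are placed into the 2m piles independently, card going into pile k with probability p_k (so the pile counts are multinomial with parameters (n, p_1,…,p_{2m})). Let d_{n,m} be the number of descents of the resulting permutation. Then there exists, on the same probability space, a random variable B_{n,m} with the Binomial(n, Σ_{k=1}^m p_{2k}) distribution such that |d_{n,m} − B_{n,m}| ≤ 4m − 1 almost surely. -/

import Mathlib

open MeasureTheory ProbabilityTheory Finset Filter

/-- The uniform probability measure on a finite type. -/
noncomputable def uniformM (α : Type*) [Fintype α] [MeasurableSpace α] : Measure α :=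
  ((Fintype.card α : ENNReal))⁻¹ • Measure.count

/-- The pile label (in `{1, …, 2m}`) of card `i` under the pile assignment `w`
(pile indices in `Fin (2*m)` are 0-based, so pile `k` carries label `k + 1`).
Under the uniform measure on words, `fun w => Xval w i` are i.i.d. uniform on `{1, …, 2m}`. -/
def Xval {m n : ℕ} (w : Fin n → Fin (2*m)) (i : Fin n) : ℕ := (w i : ℕ) + 1

/-- Sorting key of card `i` in an `m`-shelf shuffle with pile assignment `w`:
cards are ordered first by pile label; within an odd-labeled pile they keep their
increasing order, and within an even-labeled pile their order is reversed. -/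
noncomputable def shelfKey {m n : ℕ} (w : Fin n → Fin (2*m)) (i : Fin n) :
    Lex (Fin (2*m) × ℤ) :=
  toLex (w i, if Even (Xval w i) then -(i : ℤ) else (i : ℤ))

/-- The permutation of `{1, …, n}` (0-based: of `Fin n`) produced by an `m`-shelf shuffle
with pile assignment `w`: position `p` of the shuffled deck holds card `shelfPerm w p`. -/
noncomputable def shelfPerm {m n : ℕ} (w : Fin n → Fin (2*m)) : Equiv.Perm (Fin n) :=
  Tuple.sort (shelfKey w)

/-- The number of inversions of a permutation: pairs `i < j` with `π i > π j`. -/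
def invCount {n : ℕ} (π : Equiv.Perm (Fin n)) : ℕ :=
  ((Finset.univ : Finset (Fin n × Fin n)).filter
    (fun p => p.1 < p.2 ∧ π p.2 < π p.1)).card

/-- `I_{n,m}`: the number of inversions after an `m`-shelf shuffle of `n` cards,
as a random variable on the space of pile-assignment words. -/
noncomputable def shelfInv (m n : ℕ) (w : Fin n → Fin (2*m)) : ℕ := invCount (shelfPerm w)

/-- The number of descents of a permutation: indices `i` with `π i > π (i+1)`. -/
def desCount {n : ℕ} (π : Equiv.Perm (Fin n)) : ℕ :=
  ((Finset.univ : Finset (Fin n × Fin n)).filter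
    (fun p => (p.1 : ℕ) + 1 = (p.2 : ℕ) ∧ π p.2 < π p.1)).card

/-- `d_{n,m}`: the number of descents after an `m`-shelf shuffle of `n` cards,
as a random variable on the space of pile-assignment words. -/
noncomputable def shelfDes (m n : ℕ) (w : Fin n → Fin (2*m)) : ℕ := desCount (shelfPerm w)

/-- The law of a single card's pile under a biased shelf shuffle: pile `k` (0-based
index, label `k+1`) is chosen with probability `p k`. -/
noncomputable def biasedPile (m : ℕ) (p : Fin (2*m) → ℝ) : Measure (Fin (2*m)) :=
  Measure.sum fun k => (ENNReal.ofReal (p k)) • Measure.dirac k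

/-- The law of the pile-assignment word of a biased `m`-shelf shuffle of `n` cards:
the `n` cards are placed into the `2m` piles independently, each according to `p`. -/
noncomputable def biasedWord (m n : ℕ) (p : Fin (2*m) → ℝ) :
    Measure (Fin n → Fin (2*m)) :=
  Measure.pi fun _ : Fin n => biasedPile m p

/-! Take `B` to be the number of cards placed in even-labeled piles: it is a sum of `n`
independent Bernoulli variables, hence binomial. After the shuffle the piles occupy consecutive
blocks of positions. Inside an even pile every adjacent pair is a descent, inside an odd pile
none is, and at most `2m` adjacent pairs straddle two piles; moreover each nonempty pile holds
one card more than it has adjacent pairs. Hence the number of descents differs from `B` by at most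
`2m ≤ 4m - 1`. -/

theorem Finset.prod_ite_mem_eq_pow_mul_pow {ι M : Type*} [Fintype ι] [DecidableEq ι]
    [CommMonoid M] (T : Finset ι) (a b : M) :
    ∏ i, (if i ∈ T then a else b) = a ^ #T * b ^ (Fintype.card ι - #T) := by
  rw [prod_ite, prod_const, prod_const, filter_mem_eq_inter, univ_inter,
    filter_not, filter_mem_eq_inter, univ_inter, card_sdiff_of_subset (subset_univ T), card_univ]

theorem MeasureTheory.Measure.pi_card_filter_eq {α : Type*} [MeasurableSpace α] (μ : Measure α)
    [SigmaFinite μ] (n k : ℕ) (P : α → Prop) [DecidablePred P]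
    (hP : MeasurableSet {a | P a}) :
    Measure.pi (fun _ : Fin n => μ) {w | #{i | P (w i)} = k}
      = n.choose k * (μ {a | P a} ^ k * μ {a | ¬ P a} ^ (n - k)) := by
  classical
  have hunion : {w : Fin n → α | #{i | P (w i)} = k}
      = ⋃ T ∈ powersetCard k (univ : Finset (Fin n)),
          Set.univ.pi fun i => if i ∈ T then {a | P a} else {a | ¬ P a} := by
    ext w
    simp only [Set.mem_ofPred_eq, Set.mem_iUnion, mem_powersetCard_univ, Set.mem_pi,
      Set.mem_univ, true_implies, exists_prop]
    refine ⟨fun h => ⟨_, h, fun i => ?_⟩, fun ⟨T, hT, hw⟩ => ?_⟩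
    · by_cases hi : P (w i) <;> simp [hi]
    · convert hT
      ext i
      specialize hw i
      by_cases hi : i ∈ T <;> simp_all
  have hdisj : (powersetCard k (univ : Finset (Fin n)) : Set (Finset (Fin n))).PairwiseDisjoint
      fun T => Set.univ.pi fun i => if i ∈ T then {a | P a} else {a | ¬ P a} := by
    intro T _ T' _ hTT'
    obtain ⟨i, hi⟩ : ∃ i, ¬ (i ∈ T ↔ i ∈ T') := by
      by_contra! h; exact hTT' (Finset.ext h)
    refine Set.disjoint_left.mpr fun w hw hw' => ?_
    have h1 := hw i (Set.mem_univ i)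
    have h2 := hw' i (Set.mem_univ i)
    by_cases hiT : i ∈ T <;> by_cases hiT' : i ∈ T' <;> simp_all
  have hcyl : ∀ T ∈ powersetCard k (univ : Finset (Fin n)),
      Measure.pi (fun _ : Fin n => μ)
          (Set.univ.pi fun i => if i ∈ T then {a | P a} else {a | ¬ P a})
        = μ {a | P a} ^ k * μ {a | ¬ P a} ^ (n - k) := by
    intro T hT
    simp only [Measure.pi_pi, apply_ite μ]
    rw [prod_ite_mem_eq_pow_mul_pow, Fintype.card_fin, mem_powersetCard_univ.mp hT]
  rw [hunion, measure_biUnion_finset hdisj, Finset.sum_congr rfl hcyl, sum_const,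
    card_powersetCard, card_univ, Fintype.card_fin, nsmul_eq_mul]
  exact fun T _ => MeasurableSet.univ_pi fun i => by split_ifs; exacts [hP, hP.compl]

theorem biasedPile_setOf {m : ℕ} {p : Fin (2*m) → ℝ} (hp : ∀ k, 0 ≤ p k)
    (P : Fin (2*m) → Prop) [DecidablePred P] :
    biasedPile m p {j | P j} = ENNReal.ofReal (∑ j with P j, p j) := by
  rw [biasedPile, Measure.sum_apply _ (Set.toFinite _).measurableSet, tsum_fintype,
    ENNReal.ofReal_sum_of_nonneg fun j _ => hp j, sum_filter]
  refine Finset.sum_congr rfl fun j _ => ?_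
  by_cases hj : P j <;> simp [hj]

instance {m : ℕ} {p : Fin (2*m) → ℝ} : IsFiniteMeasure (biasedPile m p) :=
  ⟨by simp [biasedPile, ENNReal.sum_lt_top]⟩

theorem biasedWord_card_filter_eq {m : ℕ} {p : Fin (2*m) → ℝ} (hp : ∀ k, 0 ≤ p k)
    (hsum : ∑ k, p k = 1) (n k : ℕ) (P : Fin (2*m) → Prop) [DecidablePred P] :
    biasedWord m n p {w | #{i | P (w i)} = k}
      = n.choose k * ENNReal.ofReal
          ((∑ j with P j, p j) ^ k * (1 - ∑ j with P j, p j) ^ (n - k)) := by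
  have hnot : ∑ j with ¬ P j, p j = 1 - ∑ j with P j, p j := by
    rw [← hsum, ← sum_filter_add_sum_filter_not univ P]
    ring
  have hP : 0 ≤ ∑ j with P j, p j := sum_nonneg fun j _ => hp j
  have hP' : 0 ≤ 1 - ∑ j with P j, p j := hnot ▸ sum_nonneg fun j _ => hp j
  rw [biasedWord, Measure.pi_card_filter_eq _ _ _ _ (Set.toFinite _).measurableSet,
    biasedPile_setOf hp, biasedPile_setOf hp, hnot, ENNReal.ofReal_mul (pow_nonneg hP _),
    ENNReal.ofReal_pow hP, ENNReal.ofReal_pow hP']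

section AdjacentPositions

variable {β : Type*} {n : ℕ}

theorem card_adj_eq_le_card_filter [DecidableEq β] (g : Fin n → β) (P : β → Prop)
    [DecidablePred P] :
    #{q : Fin n × Fin n | (q.1 : ℕ) + 1 = q.2 ∧ g q.1 = g q.2 ∧ P (g q.2)}
      ≤ #{i | P (g i)} :=
  card_le_card_of_injOn Prod.snd (fun q hq => by simp_all)
    fun q hq q' hq' h => by
      simp only [coe_filter, mem_univ, true_and, Set.mem_ofPred_eq] at hq hq'
      exact Prod.ext (Fin.ext (by have := congrArg Fin.val h; omega)) h

variable [LinearOrder β] [Fintype β] {g : Fin n → β}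

theorem card_adj_lt_le_card (hg : Monotone g) :
    #{q : Fin n × Fin n | (q.1 : ℕ) + 1 = q.2 ∧ g q.1 < g q.2} ≤ Fintype.card β := by
  have lt_of_lt_snd : ∀ q q' : Fin n × Fin n, (q'.1 : ℕ) + 1 = q'.2 → g q'.1 < g q'.2 →
      q.2 < q'.2 → g q.2 < g q'.2 := fun q q' hadj hlt h =>
    (hg (Fin.le_def.mpr (by rw [Fin.lt_def] at h; omega))).trans_lt hlt
  refine (card_le_card_of_injOn (g ∘ Prod.snd) (fun _ _ => mem_coe.mpr (mem_univ _))
    fun q hq q' hq' h => ?_).trans_eq (card_univ)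
  simp only [coe_filter, mem_univ, true_and, Set.mem_ofPred_eq, Function.comp_apply]
    at hq hq' h
  rcases lt_trichotomy q.2 q'.2 with h2 | h2 | h2
  · exact absurd h (lt_of_lt_snd q q' hq'.1 hq'.2 h2).ne
  · exact Prod.ext (Fin.ext (by have := congrArg Fin.val h2; omega)) h2
  · exact absurd h (lt_of_lt_snd q' q hq.1 hq.2 h2).ne'

theorem card_filter_le_card_adj_eq_add (hg : Monotone g) (P : β → Prop) [DecidablePred P] :
    #{i | P (g i)}
      ≤ #{q : Fin n × Fin n | (q.1 : ℕ) + 1 = q.2 ∧ g q.1 = g q.2 ∧ P (g q.2)}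
        + Fintype.card β := by
  classical
  set Inner : Fin n → Prop := fun i => ∃ q : Fin n, (q : ℕ) + 1 = i ∧ g q = g i
  rw [← card_filter_add_card_filter_not (s := filter _ _) Inner, filter_filter, filter_filter]
  gcongr
  · refine card_le_card_of_surjOn Prod.snd fun i hi => ?_
    simp only [coe_filter, mem_univ, true_and, Set.mem_ofPred_eq] at hi
    obtain ⟨hP, q, hq, hgq⟩ := hi
    exact ⟨(q, i), by simp_all, rfl⟩
  -- a position whose predecessor has another value is the first of its fibre of `g`
  · refine (card_le_card_of_injOn g (fun _ _ => mem_coe.mpr (mem_univ _))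
      fun i hi j hj h => ?_).trans_eq (card_univ)
    simp only [coe_filter, mem_univ, true_and, Set.mem_ofPred_eq, Inner] at hi hj
    have exists_pred_eq : ∀ i j : Fin n, i < j → g i = g j →
        ∃ q : Fin n, (q : ℕ) + 1 = j ∧ g q = g j := by
      intro i j hij h
      rw [Fin.lt_def] at hij
      refine ⟨⟨j - 1, by omega⟩, by dsimp only; omega,
        le_antisymm (hg (Fin.le_def.mpr (Nat.sub_le _ _))) ?_⟩
      exact h ▸ hg (Fin.le_def.mpr (by dsimp only; omega))
    rcases lt_trichotomy i j with hij | hij | hij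
    · exact absurd (exists_pred_eq i j hij h) hj.2
    · exact hij
    · exact absurd (exists_pred_eq j i hij h.symm) hi.2

end AdjacentPositions

section ShelfPerm

variable {m n : ℕ} (w : Fin n → Fin (2*m))

theorem natAbs_shelfKey_snd (i : Fin n) : (ofLex (shelfKey w i)).2.natAbs = i := by
  unfold shelfKey; split_ifs <;> simp

theorem shelfKey_injective : Function.Injective (shelfKey w) := fun i j h =>
  Fin.ext (by rw [← natAbs_shelfKey_snd w i, ← natAbs_shelfKey_snd w j, h])

theorem strictMono_shelfKey_comp_shelfPerm : StrictMono (shelfKey w ∘ shelfPerm w) :=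
  (Tuple.monotone_sort _).strictMono_of_injective
    ((shelfKey_injective w).comp (shelfPerm w).injective)

theorem monotone_comp_shelfPerm : Monotone (w ∘ shelfPerm w) :=
  Prod.Lex.monotone_fst_ofLex.comp (strictMono_shelfKey_comp_shelfPerm w).monotone

theorem shelfKey_lt_shelfKey_iff {i j : Fin n} (h : w i = w j) :
    shelfKey w i < shelfKey w j ↔ if Even (Xval w i) then j < i else i < j := by
  have hX : Xval w i = Xval w j := by rw [Xval, Xval, h]
  simp only [shelfKey, Prod.Lex.toLex_lt_toLex, h, hX, lt_irrefl, false_or, true_and]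
  split_ifs <;> simp only [neg_lt_neg_iff, Nat.cast_lt, Fin.val_fin_lt]

theorem shelfPerm_lt_shelfPerm_iff {a b : Fin n} (hab : a < b)
    (h : w (shelfPerm w a) = w (shelfPerm w b)) :
    shelfPerm w b < shelfPerm w a ↔ Even (Xval w (shelfPerm w a)) := by
  have hlt := (shelfKey_lt_shelfKey_iff w h).mp (strictMono_shelfKey_comp_shelfPerm w hab)
  split_ifs at hlt with he
  · exact iff_of_true hlt he
  · exact iff_of_false hlt.asymm he

end ShelfPerm

theorem abs_shelfDes_sub_card_even_le {m n : ℕ} (w : Fin n → Fin (2*m)) :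
    |(shelfDes m n w : ℤ) - #{i | Even ((w i : ℕ) + 1)}| ≤ 2 * m := by
  set σ := shelfPerm w
  set g := w ∘ σ
  have hg : Monotone g := monotone_comp_shelfPerm w
  have hadj : ∀ q : Fin n × Fin n, (q.1 : ℕ) + 1 = q.2 → q.1 < q.2 := fun q h =>
    Fin.lt_def.mpr (by omega)
  have hcount : #{i | Even ((w i : ℕ) + 1)} = #{i | Even ((g i : ℕ) + 1)} := by
    simp only [card_filter]
    exact (Equiv.sum_comp σ _).symm
  set descents : Finset (Fin n × Fin n) := {q | (q.1 : ℕ) + 1 = q.2 ∧ σ q.2 < σ q.1}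
  set evenPairs : Finset (Fin n × Fin n) :=
    {q | (q.1 : ℕ) + 1 = q.2 ∧ g q.1 = g q.2 ∧ Even ((g q.2 : ℕ) + 1)}
  set pileChanges : Finset (Fin n × Fin n) := {q | (q.1 : ℕ) + 1 = q.2 ∧ g q.1 < g q.2}
  have hsame : evenPairs ⊆ descents := by
    intro q
    simp only [evenPairs, descents, mem_filter, mem_univ, true_and]
    rintro ⟨hq, heq, hev⟩
    exact ⟨hq, (shelfPerm_lt_shelfPerm_iff w (hadj q hq) heq).mpr
      (show Even ((g q.1 : ℕ) + 1) from heq ▸ hev)⟩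
  have hsplit : descents ⊆ evenPairs ∪ pileChanges := by
    intro q
    simp only [evenPairs, descents, pileChanges, mem_union, mem_filter, mem_univ, true_and]
    rintro ⟨hq, hdes⟩
    rcases (hg (hadj q hq).le).eq_or_lt with heq | hlt
    · exact Or.inl ⟨hq, heq, heq ▸ (shelfPerm_lt_shelfPerm_iff w (hadj q hq) heq).mp hdes⟩
    · exact Or.inr ⟨hq, hlt⟩
  have hpairs_le : #evenPairs ≤ #{i | Even ((g i : ℕ) + 1)} :=
    card_adj_eq_le_card_filter g fun j => Even ((j : ℕ) + 1)
  have hle_pairs : #{i | Even ((g i : ℕ) + 1)} ≤ #evenPairs + 2 * m :=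
    (card_filter_le_card_adj_eq_add hg fun j => Even ((j : ℕ) + 1)).trans_eq
      (by rw [Fintype.card_fin])
  have hchanges : #pileChanges ≤ 2 * m := (card_adj_lt_le_card hg).trans_eq (Fintype.card_fin _)
  have hdes_ge := card_le_card hsame
  have hdes_le := (card_le_card hsplit).trans (card_union_le _ _)
  have hdes : shelfDes m n w = #descents := rfl
  rw [hdes, hcount, abs_le]
  constructor <;> omega

theorem biased_descents_binomial_coupling_general (n m : ℕ) (hm : 1 ≤ m)
    (p : Fin (2*m) → ℝ) (hp : ∀ k, 0 ≤ p k) (hsum : ∑ k, p k = 1) :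
    ∃ B : (Fin n → Fin (2*m)) → ℕ,
      (∀ k : ℕ, (biasedWord m n p) {w | B w = k}
          = (n.choose k : ENNReal) * ENNReal.ofReal
              ((∑ j ∈ Finset.univ.filter (fun j : Fin (2*m) => Even ((j : ℕ) + 1)), p j)^k
                * (1 - ∑ j ∈ Finset.univ.filter
                    (fun j : Fin (2*m) => Even ((j : ℕ) + 1)), p j)^(n - k))) ∧
      (∀ᵐ w ∂(biasedWord m n p),
        |(shelfDes m n w : ℤ) - (B w : ℤ)| ≤ 4 * (m : ℤ) - 1) := by
  refine ⟨fun w => #{i | Even ((w i : ℕ) + 1)},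
    fun k => biasedWord_card_filter_eq hp hsum n k fun j => Even ((j : ℕ) + 1),
    ae_of_all _ fun w => ?_⟩
  have := abs_shelfDes_sub_card_even_le w
  dsimp only
  omega

/-- For `n ≥ 1`, `m ≥ 1`, and a probability vector `(p_1,…,p_{2m})`,
perform a biased `m`-shelf shuffle of `n` cards where each card independently goes into
pile `k` with probability `p_k`. Then there exists, on the same probability space, a
random variable `B_{n,m}` with the `Binomial(n, Σ_{k=1}^m p_{2k})` distribution such that
`|d_{n,m} − B_{n,m}| ≤ 4m − 1` almost surely. -/
theorem biased_descents_binomial_coupling (n m : ℕ) (hn : 1 ≤ n) (hm : 1 ≤ m)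
    (p : Fin (2*m) → ℝ) (hp : ∀ k, 0 ≤ p k) (hsum : ∑ k, p k = 1) :
    ∃ B : (Fin n → Fin (2*m)) → ℕ,
      (∀ k : ℕ, (biasedWord m n p) {w | B w = k}
          = (n.choose k : ENNReal) * ENNReal.ofReal
              ((∑ j ∈ Finset.univ.filter (fun j : Fin (2*m) => Even ((j : ℕ) + 1)), p j)^k
                * (1 - ∑ j ∈ Finset.univ.filter
                    (fun j : Fin (2*m) => Even ((j : ℕ) + 1)), p j)^(n - k))) ∧
      (∀ᵐ w ∂(biasedWord m n p),
        |(shelfDes m n w : ℤ) - (B w : ℤ)| ≤ 4 * (m : ℤ) - 1) :=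
  biased_descents_binomial_coupling_general n m hm p hp hsum
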